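/- Let λ ∈ ℂ with λ ≠ 0 and λ ≠ 1, and let F(x,y,z) = y·z² − x·(x−y)·(x−λy). For each t ∈ {0, 1, λ}, the skew-symmetric 6×6 linear matrix A(x,y,z) = x·J_x + z·J_z + y·B(t,0,1) satisfies det A(x,y,z) = F(x,y,z)² for all (x,y,z) ∈ ℂ³. -/
import Mathlib


open Matrix

/-- The skew-symmetric 6×6 matrix `J_x` with above-diagonal entries
`(1,6) = (2,5) = (3,4) = 1` and all other above-diagonal entries `0`. -/
noncomputable def Jx : Matrix (Fin 6) (Fin 6) ℂ :=
  !![0, 0, 0, 0, 0, 1;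
     0, 0, 0, 0, 1, 0;
     0, 0, 0, 1, 0, 0;
     0, 0, -1, 0, 0, 0;
     0, -1, 0, 0, 0, 0;
     -1, 0, 0, 0, 0, 0]

/-- The skew-symmetric 6×6 matrix `J_z` with above-diagonal entries
`(1,5) = (2,4) = 1` and all other above-diagonal entries `0`. -/
noncomputable def Jz : Matrix (Fin 6) (Fin 6) ℂ :=
  !![0, 0, 0, 0, 1, 0;
     0, 0, 0, 1, 0, 0;
     0, 0, 0, 0, 0, 0;
     0, -1, 0, 0, 0, 0;
     -1, 0, 0, 0, 0, 0;
     0, 0, 0, 0, 0, 0]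

/-- The skew-symmetric 6×6 matrix `B(t,s,c)` (depending also on the parameter `l = λ`)
with above-diagonal entries `(1,2) = c`, `(1,4) = (3t² − 2t(1+λ) − (1−λ)²)/4`, `(1,5) = s`,
`(1,6) = (t−1−λ)/2`, `(2,4) = −s`, `(2,5) = −t`, `(3,4) = (t−1−λ)/2`, `(3,6) = −1`,
and all other above-diagonal entries `0`. -/
noncomputable def Bmat (l t s c : ℂ) : Matrix (Fin 6) (Fin 6) ℂ :=
  !![0, c, 0, (3*t^2 - 2*t*(1+l) - (1-l)^2)/4, s, (t-1-l)/2;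
     -c, 0, 0, -s, -t, 0;
     0, 0, 0, (t-1-l)/2, 0, -1;
     -((3*t^2 - 2*t*(1+l) - (1-l)^2)/4), s, -((t-1-l)/2), 0, 0, 0;
     -s, t, 0, 0, 0, 0;
     -((t-1-l)/2), 0, 1, 0, 0, 0]

section AuxConsVal
variable {α : Type*}
@[simp] lemma cv6_1 (a : α) (s : Fin 5 → α) : vecCons a s 1 = s 0 := rfl
@[simp] lemma cv6_2 (a : α) (s : Fin 5 → α) : vecCons a s 2 = s 1 := rfl
@[simp] lemma cv6_3 (a : α) (s : Fin 5 → α) : vecCons a s 3 = s 2 := rfl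
@[simp] lemma cv6_4 (a : α) (s : Fin 5 → α) : vecCons a s 4 = s 3 := rfl
@[simp] lemma cv6_5 (a : α) (s : Fin 5 → α) : vecCons a s 5 = s 4 := rfl
@[simp] lemma cv5_1 (a : α) (s : Fin 4 → α) : vecCons a s 1 = s 0 := rfl
@[simp] lemma cv5_2 (a : α) (s : Fin 4 → α) : vecCons a s 2 = s 1 := rfl
@[simp] lemma cv5_3 (a : α) (s : Fin 4 → α) : vecCons a s 3 = s 2 := rfl
@[simp] lemma cv5_4 (a : α) (s : Fin 4 → α) : vecCons a s 4 = s 3 := rfl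
@[simp] lemma cv4_1 (a : α) (s : Fin 3 → α) : vecCons a s 1 = s 0 := rfl
@[simp] lemma cv4_2 (a : α) (s : Fin 3 → α) : vecCons a s 2 = s 1 := rfl
@[simp] lemma cv4_3 (a : α) (s : Fin 3 → α) : vecCons a s 3 = s 2 := rfl
@[simp] lemma cv3_1 (a : α) (s : Fin 2 → α) : vecCons a s 1 = s 0 := rfl
@[simp] lemma cv3_2 (a : α) (s : Fin 2 → α) : vecCons a s 2 = s 1 := rfl
@[simp] lemma cv2_1 (a : α) (s : Fin 1 → α) : vecCons a s 1 = s 0 := rfl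
end AuxConsVal

set_option maxRecDepth 100000 in
set_option maxHeartbeats 1000000 in
lemma det_skew_pattern (a b c d e f g h : ℂ) :
    Matrix.det !![0, a, 0, b, c, d;
                  -a, 0, 0, e, f, 0;
                  0, 0, 0, g, 0, h;
                  -b, -e, -g, 0, 0, 0;
                  -c, -f, 0, 0, 0, 0;
                  -d, 0, -h, 0, 0, 0] = (c*e*h + d*f*g - b*f*h)^2 := by
  set M : Matrix (Fin 6) (Fin 6) ℂ := !![0, a, 0, b, c, d;
                  -a, 0, 0, e, f, 0;
                  0, 0, 0, g, 0, h;
                  -b, -e, -g, 0, 0, 0;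
                  -c, -f, 0, 0, 0, 0;
                  -d, 0, -h, 0, 0, 0] with hMdef
  set σ : Equiv.Perm (Fin 6) := Equiv.swap 0 3 * Equiv.swap 1 4 * Equiv.swap 2 5 with hσ
  have h1 : M.submatrix σ id =
      (Matrix.reindex finSumFinEquiv finSumFinEquiv
        (Matrix.fromBlocks !![-b,-e,-g; -c,-f,0; -d,0,-h] (0 : Matrix (Fin 3) (Fin 3) ℂ)
          !![0,a,0; -a,0,0; 0,0,0] !![b,c,d; e,f,0; g,0,h])) := by
    ext i j
    fin_cases i <;> fin_cases j <;> rfl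
  have h2 := Matrix.det_permute σ M
  rw [h1] at h2
  rw [Matrix.det_reindex_self, Matrix.det_fromBlocks_zero₁₂] at h2
  have hsign : (Equiv.Perm.sign σ : ℂ) = -1 := by
    rw [hσ]
    simp [Equiv.Perm.sign_swap (by decide : (0 : Fin 6) ≠ 3),
      Equiv.Perm.sign_swap (by decide : (1 : Fin 6) ≠ 4),
      Equiv.Perm.sign_swap (by decide : (2 : Fin 6) ≠ 5)]
  rw [hsign] at h2
  have h3 : M.det = -(Matrix.det !![-b,-e,-g; -c,-f,0; -d,0,-h] *
      Matrix.det !![b,c,d; e,f,0; g,0,h]) := by linear_combination h2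
  rw [h3, Matrix.det_fin_three, Matrix.det_fin_three]
  simp only [Matrix.cons_val', Matrix.cons_val_zero, Matrix.cons_val_one, Matrix.head_cons,
    Matrix.empty_val', Matrix.cons_val_fin_one, Matrix.head_fin_const, Matrix.of_apply,
    Matrix.cons_val_succ, cv3_1, cv3_2, cv4_1, cv4_2, cv4_3]
  ring

set_option maxRecDepth 10000 in
set_option maxHeartbeats 4000000 in
theorem stmt_4 (l : ℂ) (hl0 : l ≠ 0) (hl1 : l ≠ 1)
    (t : ℂ) (ht : t = 0 ∨ t = 1 ∨ t = l) (x y z : ℂ) :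
    (x • Jx + z • Jz + y • Bmat l t 0 1).det =
      (y * z^2 - x * (x - y) * (x - l * y))^2 := by
  have hM : x • Jx + z • Jz + y • Bmat l t 0 1 =
    !![0, y, 0, y*((3*t^2 - 2*t*(1+l) - (1-l)^2)/4), z, x + y*((t-1-l)/2);
       -y, 0, 0, z, x - y*t, 0;
       0, 0, 0, x + y*((t-1-l)/2), 0, -y;
       -(y*((3*t^2 - 2*t*(1+l) - (1-l)^2)/4)), -z, -(x + y*((t-1-l)/2)), 0, 0, 0;
       -z, -(x - y*t), 0, 0, 0, 0;
       -(x + y*((t-1-l)/2)), 0, -(-y), 0, 0, 0] := by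
    ext i j
    fin_cases i <;> fin_cases j <;>
      simp [Jx, Jz, Bmat, Matrix.add_apply, Matrix.smul_apply, Matrix.of_apply,
            Matrix.vecHead, Matrix.vecTail, Function.comp] <;> ring
  rw [hM, det_skew_pattern]
  rcases ht with h|h|h <;> subst h <;> ring
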